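/- Let Ω ⊂ ℝ² be bounded Lipschitz, with the assumptions 0 < α₀ ≤ α ≤ α₁, b continuous bounded with b ≥ b₀ > 0, f ∈ L²(Ω). Let u_ε^n be the Picard iterates defined by ∫ α b(u_ε^{n−1}) ∇u_ε^n·∇v = ∫ f v for all v ∈ H₀¹(Ω). If u_ε^n ⇀ ū weakly in H₀¹(Ω) and u_ε^n → ū strongly in L²(Ω), then ū is the solution of the nonlinear problem: ∫ α b(ū) ∇ū·∇v = ∫ f v for all v ∈ H₀¹(Ω). -/

import Mathlib

open MeasureTheory Filter Topology

set_option maxHeartbeats 2000000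

noncomputable section

abbrev E2 := EuclideanSpace ℝ (Fin 2)

/-- An element of `H₀¹(Ω)`: a function together with its (weak) gradient, both
square-integrable on `Ω`, approximable in the `H¹`-norm by smooth functions
compactly supported in `Ω`. -/
structure H01 (Ω : Set E2) where
  u : E2 → ℝ
  Du : E2 → E2
  memL2 : MemLp u 2 (volume.restrict Ω)
  DmemL2 : MemLp Du 2 (volume.restrict Ω)
  approx : ∀ ε > (0:ℝ), ∃ φ : E2 → ℝ, ContDiff ℝ (⊤ : ℕ∞) φ ∧ HasCompactSupport φ ∧
    tsupport φ ⊆ Ω ∧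
    (∫ x in Ω, ((u x - φ x)^2 + ‖Du x - gradient φ x‖^2)) < ε

/-- `L²(Ω)` norm of a scalar function. -/
def L2n (Ω : Set E2) (g : E2 → ℝ) : ℝ := Real.sqrt (∫ x in Ω, (g x)^2)

/-- `L²(Ω)` norm of a vector field. -/
def L2vn (Ω : Set E2) (g : E2 → E2) : ℝ := Real.sqrt (∫ x in Ω, ‖g x‖^2)

/-- `H¹(Ω)` norm. -/
def H1n (Ω : Set E2) (V : H01 Ω) : ℝ :=
  Real.sqrt (∫ x in Ω, ((V.u x)^2 + ‖V.Du x‖^2))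

/-- `L⁶(Ω)` norm of a vector field. -/
def L6vn (Ω : Set E2) (g : E2 → E2) : ℝ := (∫ x in Ω, ‖g x‖^6) ^ ((1:ℝ)/6)

/-- Weak solution of `-div(α b(u) ∇u) = f`, `u ∈ H₀¹(Ω)`. -/
def IsWeakSol (Ω : Set E2) (α : E2 → ℝ) (b : ℝ → ℝ) (f : E2 → ℝ) (U : H01 Ω) : Prop :=
  ∀ V : H01 Ω, ∫ x in Ω, α x * b (U.u x) * (inner ℝ (U.Du x) (V.Du x) : ℝ)
    = ∫ x in Ω, f x * V.u x

/-- Solution of the frozen-coefficient linear problem `-div(α b(w) ∇U) = f`. -/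
def IsFrozenSol (Ω : Set E2) (α : E2 → ℝ) (b : ℝ → ℝ) (f : E2 → ℝ)
    (w : E2 → ℝ) (U : H01 Ω) : Prop :=
  ∀ V : H01 Ω, ∫ x in Ω, α x * b (w x) * (inner ℝ (U.Du x) (V.Du x) : ℝ)
    = ∫ x in Ω, f x * V.u x

section helpers
variable {μ : Measure E2}

lemma memL1_mul {p q : E2 → ℝ} (hp : MemLp p 2 μ) (hq : MemLp q 2 μ) :
    Integrable (fun x => p x * q x) μ := by
  have h : MemLp (p • q) 1 μ := hq.smul hp
  exact memLp_one_iff_integrable.mp h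

lemma int_norm_mul {X Y : E2 → E2} (hX : MemLp X 2 μ) (hY : MemLp Y 2 μ) :
    Integrable (fun x => ‖X x‖ * ‖Y x‖) μ := memL1_mul hX.norm hY.norm

lemma int_scalar_inner {s : E2 → ℝ} {X Y : E2 → E2} (hs : AEStronglyMeasurable s μ)
    {C : ℝ} (hC : 0 ≤ C) (hsC : ∀ᵐ x ∂μ, |s x| ≤ C)
    (hX : MemLp X 2 μ) (hY : MemLp Y 2 μ) :
    Integrable (fun x => s x * (inner ℝ (X x) (Y x) : ℝ)) μ := by
  refine ((int_norm_mul hX hY).const_mul C).mono'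
    (hs.mul (hX.aestronglyMeasurable.inner hY.aestronglyMeasurable)) ?_
  filter_upwards [hsC] with x hx
  rw [norm_mul]
  exact mul_le_mul hx (norm_inner_le_norm _ _) (norm_nonneg _)
    (by positivity)

end helpers

section sub
variable {μ : Measure E2}

lemma exists_ae_tendsto_of_int_sq [IsFiniteMeasure μ] {w : ℕ → E2 → ℝ} {v : E2 → ℝ}
    (hw : ∀ k, MemLp (w k) 2 μ) (hv : MemLp v 2 μ)
    (h : Tendsto (fun k => ∫ x, (w k x - v x)^2 ∂μ) atTop (𝓝 0)) :
    ∃ ms : ℕ → ℕ, StrictMono ms ∧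
      ∀ᵐ x ∂μ, Tendsto (fun j => w (ms j) x) atTop (𝓝 (v x)) := by
  have hint : ∀ k, Integrable (fun x => (w k x - v x)^2) μ := by
    intro k
    have := memL1_mul ((hw k).sub hv) ((hw k).sub hv)
    simpa [pow_two] using this
  have htim : TendstoInMeasure μ w atTop v := by
    rw [tendstoInMeasure_iff_dist]
    intro ε hε
    have hbound : ∀ k, μ {x | ε ≤ dist (w k x) (v x)}
        ≤ ENNReal.ofReal ((∫ x, (w k x - v x)^2 ∂μ) / ε^2) := by
      intro k
      have hsub : {x | ε ≤ dist (w k x) (v x)} ⊆ {x | ε^2 ≤ (w k x - v x)^2} := by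
        intro x hx
        have : ε ≤ |w k x - v x| := by simpa [Real.dist_eq] using hx
        calc ε^2 ≤ |w k x - v x|^2 := by
              exact pow_le_pow_left₀ hε.le this 2
          _ = (w k x - v x)^2 := sq_abs _
      have hm := mul_meas_ge_le_integral_of_nonneg
        (Eventually.of_forall (fun x => sq_nonneg (w k x - v x))) (hint k) (ε^2)
      have htr : (μ {x | ε^2 ≤ (w k x - v x)^2}).toReal
          ≤ (∫ x, (w k x - v x)^2 ∂μ) / ε^2 := by
        rw [le_div_iff₀ (by positivity)]
        rw [measureReal_def] at hm
        linarith [hm]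
      calc μ {x | ε ≤ dist (w k x) (v x)} ≤ μ {x | ε^2 ≤ (w k x - v x)^2} :=
            measure_mono hsub
        _ = ENNReal.ofReal (μ {x | ε^2 ≤ (w k x - v x)^2}).toReal :=
            (ENNReal.ofReal_toReal (measure_ne_top μ _)).symm
        _ ≤ _ := ENNReal.ofReal_le_ofReal htr
    have hupper : Tendsto (fun k => ENNReal.ofReal ((∫ x, (w k x - v x)^2 ∂μ) / ε^2))
        atTop (𝓝 0) := by
      have := (h.div_const (ε^2))
      rw [zero_div] at this
      simpa using ENNReal.tendsto_ofReal this
    exact tendsto_of_tendsto_of_tendsto_of_le_of_le tendsto_const_nhds hupper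
      (fun k => zero_le) hbound
  exact htim.exists_seq_tendsto_ae

end sub

/-- limit identification for the Picard iteration: if the
iterates converge weakly in `H₀¹(Ω)` (gradients weakly in `L²`) and strongly in
`L²(Ω)` to `ū`, then `ū` is a weak solution of the nonlinear problem. -/
theorem stmt15 (Ω : Set E2) (hΩo : IsOpen Ω) (hΩb : Bornology.IsBounded Ω)
    (α : E2 → ℝ) (hαm : Measurable α) (α₀ α₁ b₀ : ℝ) (hα₀ : 0 < α₀)
    (hα : ∀ᵐ x ∂(volume.restrict Ω), α₀ ≤ α x ∧ α x ≤ α₁)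
    (b : ℝ → ℝ) (hbc : Continuous b) (hb₀ : 0 < b₀) (hb : ∀ t, b₀ ≤ b t)
    (Bb : ℝ) (hBb : ∀ t, |b t| ≤ Bb)
    (f : E2 → ℝ) (hf : MemLp f 2 (volume.restrict Ω))
    (u : ℕ → H01 Ω) (ubar : H01 Ω)
    (hiter : ∀ n : ℕ, 1 ≤ n → IsFrozenSol Ω α b f ((u (n-1)).u) (u n))
    (hweak : ∀ τ : E2 → E2, MemLp τ 2 (volume.restrict Ω) →
      Tendsto (fun n => ∫ x in Ω, (inner ℝ ((u n).Du x - ubar.Du x) (τ x) : ℝ))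
        atTop (nhds 0))
    (hstrong : Tendsto (fun n => ∫ x in Ω, ((u n).u x - ubar.u x)^2) atTop (nhds 0)) :
    IsWeakSol Ω α b f ubar := by
  classical
  set μ := volume.restrict Ω with hμ
  haveI hfin : IsFiniteMeasure μ := by
    constructor
    rw [Measure.restrict_apply_univ]
    exact hΩb.measure_lt_top
  have hBb0 : 0 < Bb := lt_of_lt_of_le hb₀ ((hb 0).trans ((le_abs_self _).trans (hBb 0)))
  set Aα : ℝ := max α₁ 1 with hAαdef
  have hAα : 0 < Aα := lt_of_lt_of_le one_pos (le_max_right _ _)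
  have hαA : ∀ᵐ x ∂μ, |α x| ≤ Aα := by
    filter_upwards [hα] with x hx
    rw [abs_of_nonneg (le_trans hα₀.le hx.1)]
    exact hx.2.trans (le_max_left _ _)
  have hαasm : AEStronglyMeasurable α μ := hαm.aestronglyMeasurable
  have hbw : ∀ (w : E2 → ℝ), AEStronglyMeasurable w μ →
      AEStronglyMeasurable (fun x => b (w x)) μ := fun w hw =>
    hbc.comp_aestronglyMeasurable hw
  -- generic integrability of (α * c) * ⟪X, Y⟫ with |c| ≤ C everywhere
  have intg : ∀ (c : E2 → ℝ), AEStronglyMeasurable c μ → ∀ (C : ℝ), 0 ≤ C →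
      (∀ x, |c x| ≤ C) → ∀ (X Y : E2 → E2), MemLp X 2 μ → MemLp Y 2 μ →
      Integrable (fun x => (α x * c x) * (inner ℝ (X x) (Y x) : ℝ)) μ := by
    intro c hc C hC hcC X Y hX hY
    refine int_scalar_inner (hαasm.mul hc) (C := Aα * C) (by positivity) ?_ hX hY
    filter_upwards [hαA] with x hx
    rw [abs_mul]
    exact mul_le_mul hx (hcC x) (abs_nonneg _) hAα.le
  intro V
  have intsq : ∀ (w : E2 → ℝ), MemLp w 2 μ → Integrable (fun x => (w x)^2) μ := by
    intro w hw
    simpa [pow_two] using memL1_mul hw hw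
  have intnsq : ∀ (X : E2 → E2), MemLp X 2 μ → Integrable (fun x => ‖X x‖^2) μ := by
    intro X hX
    simpa [pow_two] using int_norm_mul hX hX
  -- uniform gradient bound
  set Q : ℕ → ℝ := fun n => ∫ x in Ω, ‖(u n).Du x‖^2 with hQdef
  set t : ℕ → ℝ := fun n => ∫ x in Ω, ((u n).u x - ubar.u x)^2 with htdef
  obtain ⟨T, hT⟩ : ∃ T, ∀ n, t n ≤ T := by
    obtain ⟨T, hT⟩ := hstrong.bddAbove_range
    exact ⟨T, fun n => hT ⟨n, rfl⟩⟩
  set F2 : ℝ := ∫ x in Ω, (f x)^2 with hF2def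
  set Sb : ℝ := ∫ x in Ω, (ubar.u x)^2 with hSbdef
  set K : ℝ := (F2 + (2*T + 2*Sb))/(2*(α₀*b₀)) with hKdef
  have hT0 : 0 ≤ T := le_trans (integral_nonneg (fun x => sq_nonneg _)) (hT 0)
  have hF20 : 0 ≤ F2 := integral_nonneg (fun x => sq_nonneg _)
  have hSb0 : 0 ≤ Sb := integral_nonneg (fun x => sq_nonneg _)
  have hK0 : 0 ≤ K := div_nonneg (by linarith) (by positivity)
  have hQK : ∀ n, 1 ≤ n → Q n ≤ K := by
    intro n hn
    have heq := hiter n hn (u n)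
    have hlow : α₀*b₀*(Q n)
        ≤ ∫ x in Ω, α x * b ((u (n-1)).u x) * (inner ℝ ((u n).Du x) ((u n).Du x) : ℝ) := by
      rw [hQdef, ← integral_const_mul]
      refine integral_mono_ae ((intnsq _ (u n).DmemL2).const_mul _)
        (intg _ (hbw _ (u (n-1)).memL2.1) Bb hBb0.le (fun x => hBb _) _ _
          (u n).DmemL2 (u n).DmemL2) ?_
      filter_upwards [hα] with x hx
      have h1 : (inner ℝ ((u n).Du x) ((u n).Du x) : ℝ) = ‖(u n).Du x‖^2 :=
        real_inner_self_eq_norm_sq _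
      rw [h1]
      have h2 : α₀ * b₀ ≤ α x * b ((u (n-1)).u x) :=
        mul_le_mul hx.1 (hb _) hb₀.le (le_trans hα₀.le hx.1)
      nlinarith [sq_nonneg ‖(u n).Du x‖]
    have h1 : (∫ x in Ω, f x * (u n).u x) ≤ ∫ x in Ω, ((f x)^2 + ((u n).u x)^2)/2 :=
      integral_mono_ae (memL1_mul hf (u n).memL2)
        (((intsq _ hf).add (intsq _ (u n).memL2)).div_const 2)
        (Eventually.of_forall fun x => by nlinarith [sq_nonneg (f x - (u n).u x)])
    have h2 : (∫ x in Ω, ((f x)^2 + ((u n).u x)^2)/2)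
        = (F2 + ∫ x in Ω, ((u n).u x)^2)/2 := by
      rw [integral_div, integral_add (intsq _ hf) (intsq _ (u n).memL2)]
    have h3 : (∫ x in Ω, ((u n).u x)^2) ≤ 2*(t n) + 2*Sb := by
      have hsub : MemLp (fun x => (u n).u x - ubar.u x) 2 μ := (u n).memL2.sub ubar.memL2
      have hI : Integrable (fun x => 2*((u n).u x - ubar.u x)^2 + 2*(ubar.u x)^2) μ :=
        ((intsq _ hsub).const_mul 2).add ((intsq _ ubar.memL2).const_mul 2)
      have hmono := integral_mono_ae (intsq _ (u n).memL2) hI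
        (Eventually.of_forall fun x => by
          show ((u n).u x)^2 ≤ 2*((u n).u x - ubar.u x)^2 + 2*(ubar.u x)^2
          nlinarith [sq_nonneg ((u n).u x - 2*ubar.u x)])
      rw [integral_add ((intsq _ hsub).const_mul 2)
        ((intsq _ ubar.memL2).const_mul 2), integral_const_mul, integral_const_mul] at hmono
      exact hmono
    have h4 : α₀*b₀*(Q n) ≤ (F2 + (2*T + 2*Sb))/2 := by
      have := hT n
      rw [heq] at hlow
      linarith
    rw [hKdef, le_div_iff₀ (by positivity)]
    nlinarith
  -- convergence of D m := ∫ (b(u m) - b(ū))² ‖g‖²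
  set D : ℕ → ℝ := fun m => ∫ x in Ω, (b ((u m).u x) - b (ubar.u x))^2 * ‖V.Du x‖^2
    with hDdef
  have hdbasm : ∀ (w : E2 → ℝ), AEStronglyMeasurable w μ →
      AEStronglyMeasurable (fun x => (b (w x) - b (ubar.u x))^2) μ := by
    intro w hw
    have h := (hbw _ hw).sub (hbw _ ubar.memL2.1)
    exact h.pow 2
  have hDint : ∀ (w : E2 → ℝ), AEStronglyMeasurable w μ →
      Integrable (fun x => (b (w x) - b (ubar.u x))^2 * ‖V.Du x‖^2) μ := by
    intro w hw
    refine (intnsq _ V.DmemL2).bdd_mul (c := (2*Bb)^2) (hdbasm _ hw) (Eventually.of_forall fun x => ?_)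
    have h1 : |b (w x) - b (ubar.u x)| ≤ 2*Bb := by
      have := hBb (w x); have := hBb (ubar.u x)
      calc |b (w x) - b (ubar.u x)| ≤ |b (w x)| + |b (ubar.u x)| := abs_sub _ _
        _ ≤ 2*Bb := by linarith
    calc ‖(b (w x) - b (ubar.u x))^2‖ = |b (w x) - b (ubar.u x)|^2 := by
          rw [Real.norm_eq_abs, abs_pow]
      _ ≤ (2*Bb)^2 := by nlinarith [abs_nonneg (b (w x) - b (ubar.u x))]
  have hD : Tendsto D atTop (𝓝 0) := by
    apply tendsto_of_subseq_tendsto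
    intro ns hns
    obtain ⟨ms, hms, hae⟩ := exists_ae_tendsto_of_int_sq
      (fun k => (u (ns k)).memL2) ubar.memL2 (hstrong.comp hns)
    refine ⟨ms, ?_⟩
    have hdom := tendsto_integral_of_dominated_convergence
      (μ := μ) (F := fun j x => (b ((u (ns (ms j))).u x) - b (ubar.u x))^2 * ‖V.Du x‖^2)
      (f := fun _ => (0:ℝ)) (bound := fun x => (2*Bb)^2 * ‖V.Du x‖^2)
      (fun j => (hDint _ (u (ns (ms j))).memL2.1).1)
      ((intnsq _ V.DmemL2).const_mul _)
      (fun j => Eventually.of_forall (fun x => by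
        have h1 : |b ((u (ns (ms j))).u x) - b (ubar.u x)| ≤ 2*Bb := by
          have := hBb ((u (ns (ms j))).u x); have := hBb (ubar.u x)
          calc |b ((u (ns (ms j))).u x) - b (ubar.u x)|
              ≤ |b ((u (ns (ms j))).u x)| + |b (ubar.u x)| := abs_sub _ _
            _ ≤ 2*Bb := by linarith
        have h2 : (b ((u (ns (ms j))).u x) - b (ubar.u x))^2 ≤ (2*Bb)^2 := by
          nlinarith [abs_nonneg (b ((u (ns (ms j))).u x) - b (ubar.u x)), sq_abs (b ((u (ns (ms j))).u x) - b (ubar.u x))]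
        have h3 : (0:ℝ) ≤ ‖V.Du x‖^2 := sq_nonneg _
        rw [Real.norm_eq_abs, abs_of_nonneg (by positivity)]
        exact mul_le_mul_of_nonneg_right h2 h3))
      ?_
    · simpa using hdom
    · filter_upwards [hae] with x hx
      have hb1 : Tendsto (fun j => b ((u (ns (ms j))).u x)) atTop (𝓝 (b (ubar.u x))) :=
        (hbc.tendsto _).comp hx
      have h5 : Tendsto (fun j => (b ((u (ns (ms j))).u x) - b (ubar.u x))^2 * ‖V.Du x‖^2)
          atTop (𝓝 ((b (ubar.u x) - b (ubar.u x))^2 * ‖V.Du x‖^2)) :=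
        ((hb1.sub (tendsto_const_nhds (x := b (ubar.u x)))).pow 2).mul_const _
      have hz : (b (ubar.u x) - b (ubar.u x))^2 * ‖V.Du x‖^2 = 0 := by ring
      rw [hz] at h5
      exact h5
  -- A_n → 0 (weak convergence with test field τ)
  set A : ℕ → ℝ := fun n => ∫ x in Ω,
    (α x * b (ubar.u x)) * (inner ℝ ((u n).Du x - ubar.Du x) (V.Du x) : ℝ) with hAdef
  have hAten : Tendsto A atTop (𝓝 0) := by
    set τ : E2 → E2 := fun x => (α x * b (ubar.u x)) • V.Du x with hτdef
    have hτasm : AEStronglyMeasurable τ μ := (hαasm.mul (hbw _ ubar.memL2.1)).smul V.DmemL2.1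
    have hτ : MemLp τ 2 μ := by
      refine MemLp.of_le_mul (c := Aα*Bb) V.DmemL2 hτasm ?_
      filter_upwards [hαA] with x hx
      calc ‖τ x‖ = |α x * b (ubar.u x)| * ‖V.Du x‖ := by
            rw [hτdef, norm_smul, Real.norm_eq_abs]
        _ ≤ (Aα*Bb) * ‖V.Du x‖ := by
            refine mul_le_mul_of_nonneg_right ?_ (norm_nonneg _)
            rw [abs_mul]
            exact mul_le_mul hx (hBb _) (abs_nonneg _) hAα.le
    have h := hweak τ hτ
    refine Tendsto.congr (fun n => ?_) h
    rw [hAdef]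
    exact integral_congr_ae (Eventually.of_forall fun x => by
      simp only [hτdef, real_inner_smul_right])
  -- B_n → 0
  set B : ℕ → ℝ := fun n => ∫ x in Ω,
    (α x * (b ((u (n-1)).u x) - b (ubar.u x))) * (inner ℝ ((u n).Du x) (V.Du x) : ℝ) with hBdef
  have hBint : ∀ n, Integrable (fun x =>
      (α x * (b ((u (n-1)).u x) - b (ubar.u x))) * (inner ℝ ((u n).Du x) (V.Du x) : ℝ)) μ := by
    intro n
    have hcasm : AEStronglyMeasurable (fun x => b ((u (n-1)).u x) - b (ubar.u x)) μ :=
      (hbw _ (u (n-1)).memL2.1).sub (hbw _ ubar.memL2.1)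
    refine intg _ hcasm (2*Bb) (by positivity) (fun x => ?_) _ _ (u n).DmemL2 V.DmemL2
    have h1 := hBb ((u (n-1)).u x); have h2 := hBb (ubar.u x)
    calc |b ((u (n-1)).u x) - b (ubar.u x)| ≤ |b ((u (n-1)).u x)| + |b (ubar.u x)| := abs_sub _ _
      _ ≤ 2*Bb := by linarith
  have hBten : Tendsto B atTop (𝓝 0) := by
    rw [NormedAddCommGroup.tendsto_nhds_zero]
    intro ε hε
    set δ : ℝ := ε/(Aα*K+1) with hδdef
    have hP : 0 ≤ Aα*K := by positivity
    have hδ : 0 < δ := div_pos hε (by linarith)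
    have hbound : ∀ n, 1 ≤ n → |B n| ≤ (Aα/(2*δ)) * D (n-1) + (Aα*δ/2) * K := by
      intro n hn
      have hint1 := hBint n
      have hRHSint : Integrable (fun x =>
          (Aα/(2*δ)) * ((b ((u (n-1)).u x) - b (ubar.u x))^2 * ‖V.Du x‖^2)
            + (Aα*δ/2) * ‖(u n).Du x‖^2) μ :=
        ((hDint _ (u (n-1)).memL2.1).const_mul _).add ((intnsq _ (u n).DmemL2).const_mul _)
      have h1 : |B n| ≤ ∫ x in Ω,
          ‖(α x * (b ((u (n-1)).u x) - b (ubar.u x))) * (inner ℝ ((u n).Du x) (V.Du x) : ℝ)‖ := by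
        simp only [hBdef]
        rw [← Real.norm_eq_abs]
        exact norm_integral_le_integral_norm _
      have h2 : (∫ x in Ω,
          ‖(α x * (b ((u (n-1)).u x) - b (ubar.u x))) * (inner ℝ ((u n).Du x) (V.Du x) : ℝ)‖)
          ≤ ∫ x in Ω, ((Aα/(2*δ)) * ((b ((u (n-1)).u x) - b (ubar.u x))^2 * ‖V.Du x‖^2)
            + (Aα*δ/2) * ‖(u n).Du x‖^2) := by
        refine integral_mono_ae hint1.norm hRHSint ?_
        filter_upwards [hαA] with x hx
        set p := |b ((u (n-1)).u x) - b (ubar.u x)| with hpdef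
        set q := ‖(u n).Du x‖ with hqdef
        set r := ‖V.Du x‖ with hrdef
        have hp0 : 0 ≤ p := abs_nonneg _
        have hq0 : 0 ≤ q := norm_nonneg _
        have hr0 : 0 ≤ r := norm_nonneg _
        have hi : |(inner ℝ ((u n).Du x) (V.Du x) : ℝ)| ≤ q * r := abs_real_inner_le_norm _ _
        have hs : |α x * (b ((u (n-1)).u x) - b (ubar.u x))| ≤ Aα * p := by
          rw [abs_mul]
          exact mul_le_mul_of_nonneg_right hx hp0
        have hnorm : ‖(α x * (b ((u (n-1)).u x) - b (ubar.u x)))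
            * (inner ℝ ((u n).Du x) (V.Du x) : ℝ)‖ ≤ (Aα * p) * (q * r) := by
          rw [Real.norm_eq_abs, abs_mul]
          exact mul_le_mul hs hi (abs_nonneg _) (by positivity)
        have hsq : (b ((u (n-1)).u x) - b (ubar.u x))^2 = p^2 := (sq_abs _).symm
        rw [hsq]
        have hyoung : (Aα * p) * (q * r) ≤ (Aα/(2*δ)) * (p^2 * r^2) + (Aα*δ/2) * q^2 := by
          have key : p * r * q ≤ (1/(2*δ)) * (p^2*r^2) + (δ/2) * q^2 := by
            have h2 : 0 ≤ ((p*r - δ*q)^2)/(2*δ) := by positivity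
            have h3 : ((p*r - δ*q)^2)/(2*δ)
                = (1/(2*δ)) * (p^2*r^2) + (δ/2) * q^2 - p*r*q := by
              field_simp
              ring
            linarith [h3 ▸ h2]
          calc (Aα * p) * (q * r) = Aα * (p * r * q) := by ring
            _ ≤ Aα * ((1/(2*δ)) * (p^2*r^2) + (δ/2) * q^2) :=
              mul_le_mul_of_nonneg_left key hAα.le
            _ = (Aα/(2*δ)) * (p^2 * r^2) + (Aα*δ/2) * q^2 := by ring
        exact hnorm.trans hyoung
      have h3 : (∫ x in Ω, ((Aα/(2*δ)) * ((b ((u (n-1)).u x) - b (ubar.u x))^2 * ‖V.Du x‖^2)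
            + (Aα*δ/2) * ‖(u n).Du x‖^2))
          = (Aα/(2*δ)) * D (n-1) + (Aα*δ/2) * (Q n) := by
        rw [integral_add ((hDint _ (u (n-1)).memL2.1).const_mul _)
          ((intnsq _ (u n).DmemL2).const_mul _), integral_const_mul, integral_const_mul]
      have h4 : (Aα*δ/2) * (Q n) ≤ (Aα*δ/2) * K :=
        mul_le_mul_of_nonneg_left (hQK n hn) (by positivity)
      rw [h3] at h2
      linarith
    have hDten : Tendsto (fun n => D (n-1)) atTop (𝓝 0) := hD.comp (tendsto_sub_atTop_nat 1)
    have hc2 : (Aα*δ/2)*K < ε := by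
      have hne : Aα*K+1 ≠ 0 := by positivity
      have hδε : δ*(Aα*K+1) = ε := by
        rw [hδdef]; field_simp
      nlinarith [hδ]
    have hc1 : 0 < Aα/(2*δ) := by positivity
    set c : ℝ := (ε - (Aα*δ/2)*K)/(Aα/(2*δ)) with hcdef
    have hcpos : 0 < c := div_pos (by linarith) hc1
    have hev : ∀ᶠ n in atTop, D (n-1) < c := hDten.eventually_lt_const hcpos
    filter_upwards [hev, eventually_ge_atTop 1] with n hDn hn
    rw [Real.norm_eq_abs]
    have hb1 := hbound n hn
    have hb2 : (Aα/(2*δ)) * D (n-1) < (Aα/(2*δ)) * c := mul_lt_mul_of_pos_left hDn hc1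
    have hb3 : (Aα/(2*δ)) * c = ε - (Aα*δ/2)*K := by
      rw [hcdef, mul_comm, div_mul_cancel₀ _ (ne_of_gt hc1)]
    linarith
  -- assemble
  have hkey : ∀ n, 1 ≤ n → A n + B n
      = (∫ x in Ω, f x * V.u x)
        - (∫ x in Ω, α x * b (ubar.u x) * (inner ℝ (ubar.Du x) (V.Du x) : ℝ)) := by
    intro n hn
    have hbu : AEStronglyMeasurable (fun x => b (ubar.u x)) μ := hbw _ ubar.memL2.1
    have i1 : Integrable (fun x => (α x * b (ubar.u x)) * (inner ℝ ((u n).Du x) (V.Du x):ℝ)) μ :=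
      intg _ hbu Bb hBb0.le (fun x => hBb _) _ _ (u n).DmemL2 V.DmemL2
    have i2 : Integrable (fun x => (α x * b (ubar.u x)) * (inner ℝ (ubar.Du x) (V.Du x):ℝ)) μ :=
      intg _ hbu Bb hBb0.le (fun x => hBb _) _ _ ubar.DmemL2 V.DmemL2
    have i3 : Integrable (fun x =>
        (α x * b ((u (n-1)).u x)) * (inner ℝ ((u n).Du x) (V.Du x):ℝ)) μ :=
      intg _ (hbw _ (u (n-1)).memL2.1) Bb hBb0.le (fun x => hBb _) _ _ (u n).DmemL2 V.DmemL2
    have hA_eq : A n = (∫ x in Ω, (α x * b (ubar.u x)) * (inner ℝ ((u n).Du x) (V.Du x):ℝ))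
        - (∫ x in Ω, (α x * b (ubar.u x)) * (inner ℝ (ubar.Du x) (V.Du x):ℝ)) := by
      rw [hAdef, ← integral_sub i1 i2]
      exact integral_congr_ae (Eventually.of_forall fun x => by
        simp only [Pi.sub_apply, inner_sub_left]; ring)
    have hB_eq : B n = (∫ x in Ω,
          (α x * b ((u (n-1)).u x)) * (inner ℝ ((u n).Du x) (V.Du x):ℝ))
        - (∫ x in Ω, (α x * b (ubar.u x)) * (inner ℝ ((u n).Du x) (V.Du x):ℝ)) := by
      rw [hBdef, ← integral_sub i3 i1]
      exact integral_congr_ae (Eventually.of_forall fun x => by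
        simp only [Pi.sub_apply]; ring)
    have hit := hiter n hn V
    rw [hA_eq, hB_eq]
    rw [show (∫ x in Ω, (α x * b ((u (n-1)).u x)) * (inner ℝ ((u n).Du x) (V.Du x):ℝ))
        = ∫ x in Ω, f x * V.u x from hit]
    ring
  have hconst : Tendsto (fun n => A n + B n) atTop (𝓝 0) := by
    simpa using hAten.add hBten
  have heq : (fun n => A n + B n) =ᶠ[atTop] (fun _ =>
      (∫ x in Ω, f x * V.u x)
        - (∫ x in Ω, α x * b (ubar.u x) * (inner ℝ (ubar.Du x) (V.Du x) : ℝ))) := by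
    filter_upwards [eventually_ge_atTop 1] with n hn
    exact hkey n hn
  have hzero := tendsto_nhds_unique (hconst.congr' heq) tendsto_const_nhds
  linarith [hzero]
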